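/- arXiv:0709.1213 — 2 statements merged into one kernel-verified Lean document; each statement's English description precedes it below -/
import Mathlib

section
/- Let p_{n-1}(z) = \sum_{k=0}^{n-1} z^k/k! and let \gamma be a smooth Jordan curve encircling the origin counterclockwise. Define F_n(z) = (1/(2\pi i)) \int_\gamma s^{-n} e^{n(s-1)}/(s-z) ds for z \notin \gamma. Then (ez)^{-n} p_{n-1}(nz) = -F_n(z) for z in the exterior of \gamma, and (ez)^{-n} p_{n-1}(nz) = e^{n\phi(z)} - F_n(z) for z \neq 0 in the interior of \gamma, where \phi(z) = z - 1 - \ln z with the principal branch of the logarithm. -/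
open Complex MeasureTheory intervalIntegral Filter Topology

noncomputable section

/-- A smooth Jordan curve in the complex plane, parametrized with period 1. -/
structure SmoothJordanCurve where
  toFun : ℝ → ℂ
  derivFun : ℝ → ℂ
  smooth : ContDiff ℝ (⊤ : ℕ∞) toFun
  hasDeriv : ∀ t, HasDerivAt toFun (derivFun t) t
  periodic : Function.Periodic toFun 1
  injOn : Set.InjOn toFun (Set.Ico 0 1)
  regular : ∀ t, derivFun t ≠ 0

/-- The image (trace) of the curve. -/
def SmoothJordanCurve.image (γ : SmoothJordanCurve) : Set ℂ := Set.range γ.toFun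

/-- Contour integral of `f` along the curve. -/
def SmoothJordanCurve.integral (γ : SmoothJordanCurve) (f : ℂ → ℂ) : ℂ :=
  ∫ t in (0:ℝ)..1, f (γ.toFun t) * γ.derivFun t

/-- Winding number of the curve around a point `z`. -/
def SmoothJordanCurve.winding (γ : SmoothJordanCurve) (z : ℂ) : ℂ :=
  (1 / (2 * Real.pi * I)) * ∫ t in (0:ℝ)..1, γ.derivFun t / (γ.toFun t - z)

/-- The interior of the curve: points off the trace with winding number one. -/
def SmoothJordanCurve.interior (γ : SmoothJordanCurve) : Set ℂ :=
  {z | z ∉ γ.image ∧ γ.winding z = 1}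

/-- The exterior of the curve: points off the trace with winding number zero. -/
def SmoothJordanCurve.exterior (γ : SmoothJordanCurve) : Set ℂ :=
  {z | z ∉ γ.image ∧ γ.winding z = 0}

end
noncomputable section

namespace PSECR

open SmoothJordanCurve

lemma contD (γ : SmoothJordanCurve) : Continuous γ.derivFun := by
  have h : γ.derivFun = deriv γ.toFun := funext fun t => ((γ.hasDeriv t).deriv).symm
  rw [h]; exact γ.smooth.continuous_deriv (by simp)

lemma mem_image (γ : SmoothJordanCurve) (t : ℝ) : γ.toFun t ∈ γ.image := Set.mem_range_self t

lemma intervalIntegrable_of_continuousOn (γ : SmoothJordanCurve) {f : ℂ → ℂ}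
    (hf : ContinuousOn f γ.image) :
    IntervalIntegrable (fun t => f (γ.toFun t) * γ.derivFun t) volume 0 1 :=
  ((hf.comp_continuous γ.smooth.continuous (mem_image γ)).mul (contD γ)).intervalIntegrable 0 1

/-- The integral of a function with a primitive (on the trace) vanishes. -/
lemma integral_eq_zero_of_primitive (γ : SmoothJordanCurve) (f g : ℂ → ℂ)
    (hg : ∀ s ∈ γ.image, HasDerivAt g (f s) s)
    (hf : ContinuousOn f γ.image) :
    γ.integral f = 0 := by
  have hderiv : ∀ t ∈ Set.uIcc (0:ℝ) 1,
      HasDerivAt (g ∘ γ.toFun) (f (γ.toFun t) * γ.derivFun t) t :=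
    fun t _ => (hg _ (mem_image γ t)).comp t (γ.hasDeriv t)
  have key := intervalIntegral.integral_eq_sub_of_hasDerivAt hderiv
    (intervalIntegrable_of_continuousOn γ hf)
  have hper : γ.toFun 1 = γ.toFun 0 := by simpa using γ.periodic 0
  rw [SmoothJordanCurve.integral, key]
  simp [Function.comp, hper]

lemma integral_congr_on (γ : SmoothJordanCurve) {f g : ℂ → ℂ}
    (h : ∀ s ∈ γ.image, f s = g s) : γ.integral f = γ.integral g := by
  unfold SmoothJordanCurve.integral
  apply intervalIntegral.integral_congr
  intro t _
  dsimp only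
  rw [h _ (mem_image γ t)]

lemma integral_const_mul (γ : SmoothJordanCurve) (c : ℂ) (f : ℂ → ℂ) :
    γ.integral (fun s => c * f s) = c * γ.integral f := by
  unfold SmoothJordanCurve.integral
  rw [← intervalIntegral.integral_const_mul]
  congr 1; funext t; ring

lemma integral_add (γ : SmoothJordanCurve) {f g : ℂ → ℂ}
    (hf : ContinuousOn f γ.image) (hg : ContinuousOn g γ.image) :
    γ.integral (fun s => f s + g s) = γ.integral f + γ.integral g := by
  unfold SmoothJordanCurve.integral
  rw [← intervalIntegral.integral_add (intervalIntegrable_of_continuousOn γ hf)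
    (intervalIntegrable_of_continuousOn γ hg)]
  congr 1; funext t; ring

lemma integral_sub (γ : SmoothJordanCurve) {f g : ℂ → ℂ}
    (hf : ContinuousOn f γ.image) (hg : ContinuousOn g γ.image) :
    γ.integral (fun s => f s - g s) = γ.integral f - γ.integral g := by
  unfold SmoothJordanCurve.integral
  rw [← intervalIntegral.integral_sub (intervalIntegrable_of_continuousOn γ hf)
    (intervalIntegrable_of_continuousOn γ hg)]
  congr 1; funext t; ring

lemma integral_finset_sum (γ : SmoothJordanCurve) {ι : Type*} (A : Finset ι)
    (F : ι → ℂ → ℂ) (hF : ∀ i ∈ A, ContinuousOn (F i) γ.image) :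
    γ.integral (fun s => ∑ i ∈ A, F i s) = ∑ i ∈ A, γ.integral (F i) := by
  unfold SmoothJordanCurve.integral
  rw [← intervalIntegral.integral_finset_sum
    (fun i hi => intervalIntegrable_of_continuousOn γ (hF i hi))]
  congr 1; funext t; rw [Finset.sum_mul]

/-- Winding-number integral. -/
lemma integral_one_div_sub (γ : SmoothJordanCurve) (w : ℂ) :
    γ.integral (fun s => 1 / (s - w)) = (2 * Real.pi * I) * γ.winding w := by
  rw [SmoothJordanCurve.integral, SmoothJordanCurve.winding, ← mul_assoc]
  have h : (2 * (Real.pi:ℂ) * I) ≠ 0 := by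
    simp [Real.pi_ne_zero, I_ne_zero]
  rw [mul_one_div, div_self h, one_mul]
  congr 1; funext t; rw [one_div, div_eq_mul_inv, mul_comm]

/-- Integral of integer powers, exponent ≠ -1, over a curve avoiding 0. -/
lemma integral_zpow (γ : SmoothJordanCurve) (h0 : (0:ℂ) ∉ γ.image) (m : ℤ) (hm : m ≠ -1) :
    γ.integral (fun s => s ^ m) = 0 := by
  have hne : ∀ s ∈ γ.image, s ≠ 0 := fun s hs h => h0 (h ▸ hs)
  have hm1 : ((m:ℂ) + 1) ≠ 0 := by
    intro h
    apply hm
    have h2 : ((m + 1 : ℤ) : ℂ) = 0 := by push_cast; linear_combination h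
    have := Int.cast_injective (α := ℂ) (by simpa using h2 : ((m+1 : ℤ):ℂ) = ((0:ℤ):ℂ))
    omega
  apply integral_eq_zero_of_primitive γ _ (fun s => ((m:ℂ)+1)⁻¹ * s ^ (m+1))
  · intro s hs
    have h1 := (hasDerivAt_zpow (m+1) s (Or.inl (hne s hs))).const_mul (((m:ℂ)+1)⁻¹)
    refine h1.congr_deriv ?_
    push_cast
    rw [add_sub_cancel_right]
    field_simp
  · exact fun s hs => ((continuousAt_zpow₀ s m (Or.inl (hne s hs))).continuousWithinAt)

/-- Continuity of a power series function with factorially decaying coefficients. -/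
lemma continuous_pseries (w : ℂ) (c : ℕ → ℂ)
    (hc : ∀ R : ℝ, 0 ≤ R → Summable fun k => ‖c k‖ * R ^ k) :
    Continuous (fun s => ∑' k, c k * (s - w) ^ k) := by
  rw [continuous_iff_continuousAt]
  intro x
  set R : ℝ := ‖x - w‖ + 1 with hR
  have hR0 : (0:ℝ) ≤ R := by positivity
  have htu : TendstoUniformlyOn (fun N s => ∑ k ∈ Finset.range N, c k * (s - w) ^ k)
      (fun s => ∑' k, c k * (s - w) ^ k) atTop (Metric.closedBall w R) := by
    apply tendstoUniformlyOn_tsum_nat (hc R hR0)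
    intro k s hs
    rw [norm_mul, norm_pow]
    have hsw : ‖s - w‖ ≤ R := by
      simpa [Metric.mem_closedBall, dist_eq_norm] using hs
    gcongr
  have hcont : ContinuousOn (fun s => ∑' k, c k * (s - w) ^ k) (Metric.closedBall w R) := by
    apply htu.continuousOn
    refine Filter.Frequently.of_forall fun N => ?_
    exact Continuous.continuousOn (by fun_prop)
  apply hcont.continuousAt
  have hxball : x ∈ Metric.ball w R := by
    simp only [Metric.mem_ball, dist_eq_norm, hR]
    linarith
  exact Filter.mem_of_superset (Metric.isOpen_ball.mem_nhds hxball) Metric.ball_subset_closedBall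

/-- The contour integral of an everywhere-convergent power series vanishes. -/
lemma integral_pseries_eq_zero (γ : SmoothJordanCurve) (w : ℂ) (c : ℕ → ℂ)
    (hc : ∀ R : ℝ, 0 ≤ R → Summable fun k => ‖c k‖ * R ^ k) :
    γ.integral (fun s => ∑' k, c k * (s - w) ^ k) = 0 := by
  obtain ⟨R₀, hR₀⟩ := (isCompact_Icc (a := (0:ℝ)) (b := 1)).exists_bound_of_continuousOn
      ((γ.smooth.continuous.sub continuous_const).continuousOn (s := Set.Icc 0 1))
  set R : ℝ := max R₀ 0 with hRdef
  have hR0 : (0:ℝ) ≤ R := le_max_right _ _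
  have hmem : ∀ t ∈ Set.Icc (0:ℝ) 1, ‖γ.toFun t - w‖ ≤ R :=
    fun t ht => (hR₀ t ht).trans (le_max_left _ _)
  have hzero : ∀ N : ℕ,
      γ.integral (fun s => ∑ k ∈ Finset.range N, c k * (s - w) ^ k) = 0 := by
    intro N
    apply integral_eq_zero_of_primitive γ _
      (fun s => ∑ k ∈ Finset.range N, c k * (((k:ℂ)+1)⁻¹ * (s - w) ^ (k+1)))
    · intro s _
      apply HasDerivAt.fun_sum
      intro k _
      have hpow : HasDerivAt (fun y : ℂ => (y - w) ^ (k+1)) (((k:ℕ)+1) * (s - w) ^ k) s := by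
        have h1 := (hasDerivAt_pow (k+1) (s - w)).comp s ((hasDerivAt_id s).sub_const w)
        simpa [Function.comp_def] using h1
      have h2 := (hpow.const_mul (((k:ℂ)+1)⁻¹)).const_mul (c k)
      refine h2.congr_deriv ?_
      have hk : ((k:ℂ)+1) ≠ 0 := Nat.cast_add_one_ne_zero k
      field_simp
    · exact Continuous.continuousOn (by fun_prop)
  have hsum : ∀ s : ℂ, Summable (fun k => c k * (s - w) ^ k) := by
    intro s
    apply Summable.of_norm
    refine (hc ‖s - w‖ (norm_nonneg _)).congr fun k => ?_
    rw [norm_mul, norm_pow]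
  set T : ℝ := ∑' k, ‖c k‖ * R ^ k with hT
  have hbd : ∀ (N : ℕ), ∀ t ∈ Set.Icc (0:ℝ) 1,
      ‖(∑ k ∈ Finset.range N, c k * (γ.toFun t - w) ^ k)‖ ≤ T := by
    intro N t ht
    calc ‖∑ k ∈ Finset.range N, c k * (γ.toFun t - w) ^ k‖
        ≤ ∑ k ∈ Finset.range N, ‖c k * (γ.toFun t - w) ^ k‖ := norm_sum_le _ _
      _ ≤ ∑ k ∈ Finset.range N, ‖c k‖ * R ^ k := by
          apply Finset.sum_le_sum
          intro k _
          rw [norm_mul, norm_pow]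
          gcongr
          exact hmem t ht
      _ ≤ T := (hc R hR0).sum_le_tsum _ (fun k _ => by positivity)
  obtain ⟨C, hC⟩ := (isCompact_Icc (a := (0:ℝ)) (b := 1)).exists_bound_of_continuousOn
      (contD γ).continuousOn
  have hC0 : (0:ℝ) ≤ C := le_trans (norm_nonneg _) (hC 0 (by norm_num))
  have hIoc : Set.uIoc (0:ℝ) 1 ⊆ Set.Icc 0 1 := by
    rw [Set.uIoc_of_le (by norm_num : (0:ℝ) ≤ 1)]
    exact Set.Ioc_subset_Icc_self
  have key := intervalIntegral.tendsto_integral_filter_of_dominated_convergence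
    (μ := volume) (a := (0:ℝ)) (b := 1) (l := atTop)
    (F := fun N t => (∑ k ∈ Finset.range N, c k * (γ.toFun t - w) ^ k) * γ.derivFun t)
    (f := fun t => (∑' k, c k * (γ.toFun t - w) ^ k) * γ.derivFun t)
    (fun _ => T * C)
    (by
      filter_upwards with N
      have hcγ := γ.smooth.continuous
      have hcD := contD γ
      exact (Continuous.aestronglyMeasurable (by fun_prop)))
    (by
      filter_upwards with N
      filter_upwards with t
      intro ht
      rw [norm_mul]
      have h1 := hbd N t (hIoc ht)
      have h2 := hC t (hIoc ht)
      have hTnn : (0:ℝ) ≤ T := le_trans (norm_nonneg _) (hbd 0 t (hIoc ht))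
      exact mul_le_mul h1 h2 (norm_nonneg _) hTnn)
    intervalIntegrable_const
    (by
      filter_upwards with t
      intro _
      exact ((hsum (γ.toFun t)).hasSum.tendsto_sum_nat).mul_const _)
  have hFN : (fun N : ℕ => ∫ t in (0:ℝ)..1,
      (∑ k ∈ Finset.range N, c k * (γ.toFun t - w) ^ k) * γ.derivFun t) = fun _ => (0:ℂ) :=
    funext fun N => hzero N
  rw [hFN] at key
  exact (tendsto_nhds_unique key tendsto_const_nhds)

/-- Taylor coefficients of `exp (n * (s - 1))`. -/
def cc (n k : ℕ) : ℂ := Complex.exp (-(n:ℂ)) * (n:ℂ)^k / (k.factorial : ℂ)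

/-- Tail functions: `vv n j s = (exp (n (s-1)) - ∑_{k<j} cc n k s^k) / s^j`, as entire series. -/
def vv (n j : ℕ) (s : ℂ) : ℂ := ∑' m, cc n (m + j) * s ^ m

/-- Difference-quotient coefficients at `z`. -/
def dd (n : ℕ) (z : ℂ) (m : ℕ) : ℂ :=
  Complex.exp ((n:ℂ)*(z-1)) * (n:ℂ)^(m+1) / (((m+1).factorial : ℕ) : ℂ)

/-- The difference quotient `(exp (n (s-1)) - exp (n (z-1))) / (s - z)` as entire series. -/
def uu (n : ℕ) (z : ℂ) (s : ℂ) : ℂ := ∑' m, dd n z m * (s - z)^m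

lemma norm_cc (n k : ℕ) : ‖cc n k‖ = Real.exp (-(n:ℝ)) * (n:ℝ)^k / (k.factorial : ℝ) := by
  rw [cc]
  simp [norm_div, norm_mul, norm_pow, Complex.norm_exp]

lemma summable_expbound (c : ℕ → ℂ) (A a : ℝ) (ha : 0 ≤ a)
    (hbd : ∀ k, ‖c k‖ ≤ A * a^k / (k.factorial:ℝ)) :
    ∀ R : ℝ, 0 ≤ R → Summable fun k => ‖c k‖ * R ^ k := by
  intro R hR
  apply Summable.of_nonneg_of_le (fun k => by positivity) (fun k => ?_)
    ((Real.summable_pow_div_factorial (a*R)).mul_left A)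
  calc ‖c k‖ * R^k ≤ (A * a^k / (k.factorial:ℝ)) * R^k := by
        gcongr
        exact hbd k
    _ = A * ((a*R)^k / (k.factorial:ℝ)) := by rw [mul_pow]; ring

lemma cc_bound (n j : ℕ) :
    ∀ k, ‖cc n (k + j)‖ ≤ (Real.exp (-(n:ℝ)) * (n:ℝ)^j) * (n:ℝ)^k / (k.factorial:ℝ) := by
  intro k
  rw [norm_cc, pow_add]
  have h1 : (k.factorial : ℝ) ≤ ((k+j).factorial : ℝ) := by
    exact_mod_cast Nat.factorial_le (Nat.le_add_right k j)
  have h2 : (0:ℝ) < (k.factorial : ℝ) := by positivity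
  calc Real.exp (-(n:ℝ)) * ((n:ℝ)^k * (n:ℝ)^j) / ((k+j).factorial : ℝ)
      ≤ Real.exp (-(n:ℝ)) * ((n:ℝ)^k * (n:ℝ)^j) / (k.factorial : ℝ) := by gcongr
    _ = (Real.exp (-(n:ℝ)) * (n:ℝ)^j) * (n:ℝ)^k / (k.factorial:ℝ) := by ring

lemma dd_bound (n : ℕ) (z : ℂ) :
    ∀ m, ‖dd n z m‖ ≤ (‖Complex.exp ((n:ℂ)*(z-1))‖ * (n:ℝ)) * (n:ℝ)^m / (m.factorial:ℝ) := by
  intro m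
  rw [dd, norm_div, norm_mul, norm_pow]
  have h1 : (m.factorial : ℝ) ≤ ((m+1).factorial : ℝ) := by
    exact_mod_cast Nat.factorial_le (Nat.le_succ m)
  have h2 : (0:ℝ) < (m.factorial : ℝ) := by positivity
  have h3 : ‖((((m+1).factorial : ℕ)) : ℂ)‖ = (((m+1).factorial : ℕ) : ℝ) := by
    simp [Complex.norm_natCast]
  rw [h3]
  have h4 : ‖(n:ℂ)‖ = (n:ℝ) := by simp [Complex.norm_natCast]
  rw [h4, pow_succ]
  calc ‖Complex.exp ((n:ℂ)*(z-1))‖ * ((n:ℝ)^m * (n:ℝ)) / (((m+1).factorial : ℕ) : ℝ)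
      ≤ ‖Complex.exp ((n:ℂ)*(z-1))‖ * ((n:ℝ)^m * (n:ℝ)) / (m.factorial : ℝ) := by gcongr
    _ = (‖Complex.exp ((n:ℂ)*(z-1))‖ * (n:ℝ)) * (n:ℝ)^m / (m.factorial:ℝ) := by ring

lemma cc_summable (n j : ℕ) : ∀ R : ℝ, 0 ≤ R → Summable fun k => ‖cc n (k + j)‖ * R ^ k :=
  summable_expbound _ _ _ (by positivity) (cc_bound n j)

lemma dd_summable (n : ℕ) (z : ℂ) : ∀ R : ℝ, 0 ≤ R → Summable fun m => ‖dd n z m‖ * R ^ m :=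
  summable_expbound _ _ _ (by positivity) (dd_bound n z)

lemma exp_tsum (x : ℂ) : Complex.exp x = ∑' k : ℕ, x ^ k / ((k.factorial : ℕ) : ℂ) := by
  rw [Complex.exp_eq_exp_ℂ, NormedSpace.exp_eq_tsum_div]

lemma vv_zero (n : ℕ) (s : ℂ) : vv n 0 s = Complex.exp ((n:ℂ) * (s - 1)) := by
  have h2 : vv n 0 s = Complex.exp (-(n:ℂ)) * ∑' k : ℕ, ((n:ℂ)*s)^k / ((k.factorial : ℕ) : ℂ) := by
    rw [← tsum_mul_left]
    unfold vv cc
    congr 1; funext m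
    rw [mul_pow]; ring
  rw [h2, ← exp_tsum, ← Complex.exp_add]
  congr 1; ring

lemma vv_summable_at (n j : ℕ) (s : ℂ) : Summable (fun m => cc n (m + j) * s ^ m) := by
  apply Summable.of_norm
  exact ((cc_summable n j) ‖s‖ (norm_nonneg s)).congr fun k => by rw [norm_mul, norm_pow]

lemma vv_rec (n j : ℕ) (s : ℂ) : vv n j s = cc n j + s * vv n (j+1) s := by
  rw [vv, (vv_summable_at n j s).tsum_eq_zero_add]
  congr 1
  · simp
  · unfold vv
    rw [← tsum_mul_left]
    congr 1; funext m
    rw [show m + 1 + j = m + (j+1) by omega, pow_succ]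
    ring

lemma vv_formula (n j : ℕ) (s : ℂ) :
    Complex.exp ((n:ℂ)*(s-1)) = s^j * vv n j s + ∑ k ∈ Finset.range j, cc n k * s ^ k := by
  induction j with
  | zero => simp [vv_zero]
  | succ j ih =>
    rw [vv_rec n j s] at ih
    rw [ih, Finset.sum_range_succ]
    ring

lemma uu_key (n : ℕ) (z s : ℂ) :
    (s - z) * uu n z s = Complex.exp ((n:ℂ)*(s-1)) - Complex.exp ((n:ℂ)*(z-1)) := by
  have hsumm : Summable (fun k : ℕ => ((n:ℂ)*(s-z))^k / ((k.factorial : ℕ) : ℂ)) := by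
    apply Summable.of_norm
    have h := Real.summable_pow_div_factorial ‖(n:ℂ)*(s-z)‖
    refine h.congr fun k => ?_
    rw [norm_div, norm_pow]
    congr 1
    simp [Complex.norm_natCast]
  have h1 : (n:ℂ)*(z-1) + (n:ℂ)*(s-z) = (n:ℂ)*(s-1) := by ring
  have h2 : Complex.exp ((n:ℂ)*(s-1)) - Complex.exp ((n:ℂ)*(z-1))
      = Complex.exp ((n:ℂ)*(z-1)) * (Complex.exp ((n:ℂ)*(s-z)) - 1) := by
    have h3 : Complex.exp ((n:ℂ)*(z-1)) * Complex.exp ((n:ℂ)*(s-z)) = Complex.exp ((n:ℂ)*(s-1)) := by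
      rw [← Complex.exp_add, h1]
    linear_combination -h3
  rw [h2, exp_tsum ((n:ℂ)*(s-z)), hsumm.tsum_eq_zero_add]
  simp only [pow_zero, Nat.factorial_zero, Nat.cast_one, one_div_one]
  rw [add_sub_cancel_left]
  rw [uu, ← tsum_mul_left, ← tsum_mul_left]
  congr 1; funext m
  rw [dd, mul_pow]
  have hm : (((m+1).factorial : ℕ) : ℂ) ≠ 0 := by
    exact_mod_cast Nat.cast_ne_zero.mpr (Nat.factorial_ne_zero (m+1))
  field_simp
  ring

/-- The partial-fraction decomposition of the integrand. -/
lemma master (n : ℕ) (z s : ℂ) (hz : z ≠ 0) (hs : s ≠ 0) (hsz : s ≠ z) :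
    s ^ (-(n:ℤ)) * Complex.exp ((n:ℂ)*(s-1)) / (s - z)
  = z ^ (-(n:ℤ)) * uu n z s
    + (z ^ (-(n:ℤ)) * Complex.exp ((n:ℂ)*(z-1))) * (1/(s-z))
    - ∑ j ∈ Finset.range n, (z^((j:ℤ)-(n:ℤ)) * vv n (j+1) s
        + ∑ k ∈ Finset.range (j+1), (z^((j:ℤ)-(n:ℤ)) * cc n k) * s^((k:ℤ)-(j:ℤ)-1)) := by
  have hszne : s - z ≠ 0 := sub_ne_zero.mpr hsz
  have huu : uu n z s = (Complex.exp ((n:ℂ)*(s-1)) - Complex.exp ((n:ℂ)*(z-1))) / (s - z) := by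
    rw [eq_div_iff hszne]
    linear_combination uu_key n z s
  have hbrk : ∀ j ∈ Finset.range n, z^((j:ℤ)-(n:ℤ)) * vv n (j+1) s
        + ∑ k ∈ Finset.range (j+1), (z^((j:ℤ)-(n:ℤ)) * cc n k) * s^((k:ℤ)-(j:ℤ)-1)
      = z^((j:ℤ)-(n:ℤ)) * (Complex.exp ((n:ℂ)*(s-1)) * (s^(j+1))⁻¹) := by
    intro j _
    have hsj : (s:ℂ)^(j+1) ≠ 0 := pow_ne_zero _ hs
    have hv : vv n (j+1) s
        = (Complex.exp ((n:ℂ)*(s-1)) - ∑ k ∈ Finset.range (j+1), cc n k * s ^ k) * (s^(j+1))⁻¹ := by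
      have h := vv_formula n (j+1) s
      rw [eq_mul_inv_iff_mul_eq₀ hsj]
      linear_combination -h
    have hsum : ∑ k ∈ Finset.range (j+1), (z^((j:ℤ)-(n:ℤ)) * cc n k) * s^((k:ℤ)-(j:ℤ)-1)
        = z^((j:ℤ)-(n:ℤ)) * ((∑ k ∈ Finset.range (j+1), cc n k * s ^ k) * (s^(j+1))⁻¹) := by
      rw [Finset.sum_mul, Finset.mul_sum]
      apply Finset.sum_congr rfl
      intro k _
      have hpows : s^((k:ℤ)-(j:ℤ)-1) = s^(k:ℕ) * (s^(j+1:ℕ))⁻¹ := by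
        rw [← zpow_natCast s k, ← zpow_natCast s (j+1), ← zpow_neg, ← zpow_add₀ hs]
        congr 1
        push_cast
        ring
      rw [hpows]
      ring
    rw [hv, hsum]
    ring
  rw [huu, Finset.sum_congr rfl hbrk]
  have hsum2 : ∑ j ∈ Finset.range n, z^((j:ℤ)-(n:ℤ)) * (Complex.exp ((n:ℂ)*(s-1)) * (s^(j+1))⁻¹)
      = Complex.exp ((n:ℂ)*(s-1)) * ((z^n * s^n : ℂ))⁻¹
          * ∑ j ∈ Finset.range n, z^j * s^(n-1-j) := by
    rw [Finset.mul_sum]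
    refine Finset.sum_congr rfl fun j hj => ?_
    have hjn := Finset.mem_range.mp hj
    have hz1 : z^((j:ℤ)-(n:ℤ)) = z^(j:ℕ) * (z^(n:ℕ))⁻¹ := by
      rw [zpow_sub₀ hz, zpow_natCast, zpow_natCast, div_eq_mul_inv]
    have hs1 : (s^(j+1:ℕ))⁻¹ = s^((n-1-j : ℕ)) * (s^(n:ℕ))⁻¹ := by
      rw [← zpow_natCast s (n-1-j), ← zpow_natCast s n, ← zpow_neg, ← zpow_add₀ hs,
        ← zpow_natCast s (j+1), ← zpow_neg]
      congr 1
      omega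
    rw [hz1, hs1, mul_inv]
    ring
  rw [hsum2]
  have hgeom := geom_sum₂_mul z s n
  have hzn : (z:ℂ)^n ≠ 0 := pow_ne_zero n hz
  have hsn : (s:ℂ)^n ≠ 0 := pow_ne_zero n hs
  rw [zpow_neg, zpow_neg, zpow_natCast, zpow_natCast]
  field_simp
  linear_combination (-(Complex.exp ((n:ℂ)*(s-1)))) * hgeom

/-- The value of the Cauchy-type integral. -/
lemma F_value (γ : SmoothJordanCurve) (n : ℕ) (h0 : (0:ℂ) ∉ γ.image) (hccw : γ.winding 0 = 1)
    (z : ℂ) (hzim : z ∉ γ.image) (hz0 : z ≠ 0) :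
    (1 / (2 * Real.pi * I)) *
      γ.integral (fun s => s ^ (-(n:ℤ)) * Complex.exp ((n:ℂ) * (s - 1)) / (s - z))
    = z ^ (-(n:ℤ)) * Complex.exp ((n:ℂ)*(z-1)) * γ.winding z
      - ∑ j ∈ Finset.range n, cc n j * z^((j:ℤ)-(n:ℤ)) := by
  have hne0 : ∀ s ∈ γ.image, s ≠ 0 := fun s hs h => h0 (h ▸ hs)
  have hnez : ∀ s ∈ γ.image, s ≠ z := fun s hs h => hzim (h ▸ hs)
  have h2pi : (2 * (Real.pi:ℂ) * I) ≠ 0 := by simp [Real.pi_ne_zero, I_ne_zero]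
  have hcuu : Continuous (uu n z) := continuous_pseries z (dd n z) (dd_summable n z)
  have hcvv : ∀ j : ℕ, Continuous (vv n j) := by
    intro j
    have h1 := continuous_pseries 0 (fun m => cc n (m + j)) (cc_summable n j)
    have h2 : (vv n j) = fun s => ∑' m, cc n (m + j) * (s - 0)^m := by
      funext s; simp [vv]
    rw [h2]; exact h1
  have hcinv : ContinuousOn (fun s : ℂ => 1/(s - z)) γ.image := by
    apply ContinuousOn.div continuousOn_const (by fun_prop)
    intro s hs; exact sub_ne_zero.mpr (hnez s hs)
  have hcpow : ∀ m : ℤ, ContinuousOn (fun s : ℂ => s ^ m) γ.image :=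
    fun m s hs => (continuousAt_zpow₀ s m (Or.inl (hne0 s hs))).continuousWithinAt
  rw [integral_congr_on γ (fun s hs => master n z s hz0 (hne0 s hs) (hnez s hs))]
  have hFj : ∀ j ∈ Finset.range n, ContinuousOn (fun s => z^((j:ℤ)-(n:ℤ)) * vv n (j+1) s
        + ∑ k ∈ Finset.range (j+1), (z^((j:ℤ)-(n:ℤ)) * cc n k) * s^((k:ℤ)-(j:ℤ)-1)) γ.image := by
    intro j _
    apply ContinuousOn.add
    · exact (continuous_const.mul (hcvv (j+1))).continuousOn
    · exact continuousOn_finset_sum _ (fun k _ => continuousOn_const.mul (hcpow _))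
  rw [integral_sub γ (ContinuousOn.fun_add ((continuous_const.fun_mul hcuu).continuousOn)
      (continuousOn_const.fun_mul hcinv)) (continuousOn_finset_sum _ hFj)]
  rw [integral_add γ ((continuous_const.fun_mul hcuu).continuousOn) (continuousOn_const.fun_mul hcinv)]
  rw [integral_finset_sum γ _ _ hFj]
  have Iuu : γ.integral (fun s => z ^ (-(n:ℤ)) * uu n z s) = 0 := by
    rw [integral_const_mul]
    rw [show γ.integral (uu n z) = γ.integral (fun s => ∑' m, dd n z m * (s - z)^m) from rfl]
    rw [integral_pseries_eq_zero γ z (dd n z) (dd_summable n z), mul_zero]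
  have Iinv : γ.integral (fun s => (z ^ (-(n:ℤ)) * Complex.exp ((n:ℂ)*(z-1))) * (1/(s-z)))
      = (z ^ (-(n:ℤ)) * Complex.exp ((n:ℂ)*(z-1))) * ((2 * Real.pi * I) * γ.winding z) := by
    rw [integral_const_mul, integral_one_div_sub]
  have Ij : ∀ j ∈ Finset.range n, γ.integral (fun s => z^((j:ℤ)-(n:ℤ)) * vv n (j+1) s
        + ∑ k ∈ Finset.range (j+1), (z^((j:ℤ)-(n:ℤ)) * cc n k) * s^((k:ℤ)-(j:ℤ)-1))
      = (2 * Real.pi * I) * (z^((j:ℤ)-(n:ℤ)) * cc n j) := by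
    intro j _
    rw [integral_add γ ((continuous_const.fun_mul (hcvv (j+1))).continuousOn)
      (continuousOn_finset_sum _ (fun k _ => continuousOn_const.fun_mul (hcpow _)))]
    have hv0 : γ.integral (fun s => z^((j:ℤ)-(n:ℤ)) * vv n (j+1) s) = 0 := by
      rw [integral_const_mul]
      have h2 : γ.integral (vv n (j+1))
          = γ.integral (fun s => ∑' m, cc n (m + (j+1)) * (s - 0)^m) := by
        apply integral_congr_on
        intro s _
        simp [vv]
      rw [h2, integral_pseries_eq_zero γ 0 _ (cc_summable n (j+1)), mul_zero]
    rw [hv0, zero_add]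
    rw [integral_finset_sum γ _ _ (fun k _ => continuousOn_const.fun_mul (hcpow _))]
    rw [Finset.sum_range_succ]
    have hzero' : ∀ k ∈ Finset.range j,
        γ.integral (fun s => (z^((j:ℤ)-(n:ℤ)) * cc n k) * s^((k:ℤ)-(j:ℤ)-1)) = 0 := by
      intro k hk
      have hkj := Finset.mem_range.mp hk
      rw [integral_const_mul, integral_zpow γ h0 _ (by omega), mul_zero]
    rw [Finset.sum_congr rfl hzero']
    have hlast : γ.integral (fun s => (z^((j:ℤ)-(n:ℤ)) * cc n j) * s^((j:ℤ)-(j:ℤ)-1))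
        = (z^((j:ℤ)-(n:ℤ)) * cc n j) * (2 * Real.pi * I) := by
      rw [integral_const_mul]
      have h3 : γ.integral (fun s => s^((j:ℤ)-(j:ℤ)-1)) = γ.integral (fun s => 1/(s - 0)) := by
        apply integral_congr_on
        intro s _
        rw [show (j:ℤ)-(j:ℤ)-1 = -1 by ring]
        simp
      rw [h3, integral_one_div_sub γ 0, hccw, mul_one]
    rw [hlast]
    simp
    ring
  rw [Iuu, Iinv, zero_add, Finset.sum_congr rfl Ij, ← Finset.mul_sum]
  have hcomm : ∑ j ∈ Finset.range n, z^((j:ℤ)-(n:ℤ)) * cc n j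
      = ∑ j ∈ Finset.range n, cc n j * z^((j:ℤ)-(n:ℤ)) :=
    Finset.sum_congr rfl fun j _ => mul_comm _ _
  rw [hcomm]
  field_simp

lemma lhs_eq (n : ℕ) (z : ℂ) (hz0 : z ≠ 0) (p : ℂ → ℂ)
    (hp : ∀ z, p z = ∑ k ∈ Finset.range n, z ^ k / (Nat.factorial k)) :
    (Complex.exp 1 * z) ^ (-(n:ℤ)) * p ((n:ℂ) * z)
      = ∑ j ∈ Finset.range n, cc n j * z^((j:ℤ)-(n:ℤ)) := by
  rw [hp, mul_zpow, Finset.mul_sum]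
  apply Finset.sum_congr rfl
  intro k _
  rw [cc]
  have he : Complex.exp 1 ^ (-(n:ℤ)) = Complex.exp (-(n:ℂ)) := by
    rw [← Complex.exp_int_mul]
    congr 1
    push_cast; ring
  have hzz : z ^ ((k:ℤ) - n) = z ^ (-(n:ℤ)) * z^(k:ℕ) := by
    rw [← zpow_natCast z k, ← zpow_add₀ hz0]
    congr 1; ring
  rw [he, hzz, mul_pow]
  ring

end PSECR

theorem partial_sum_exp_cauchy_representation
    (n : ℕ) (hn : 1 ≤ n) (γ : SmoothJordanCurve)
    (h0 : (0:ℂ) ∉ γ.image) (hccw : γ.winding 0 = 1)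
    (F : ℂ → ℂ)
    (hF : ∀ z ∉ γ.image, F z =
      (1 / (2 * Real.pi * I)) *
        γ.integral (fun s => s ^ (-(n:ℤ)) * Complex.exp (n * (s - 1)) / (s - z)))
    (p : ℂ → ℂ)
    (hp : ∀ z, p z = ∑ k ∈ Finset.range n, z ^ k / (Nat.factorial k)) :
    (∀ z ∈ γ.exterior,
      (Complex.exp 1 * z) ^ (-(n:ℤ)) * p ((n:ℂ) * z) = -F z) ∧
    (∀ z ∈ γ.interior, z ≠ 0 →
      (Complex.exp 1 * z) ^ (-(n:ℤ)) * p ((n:ℂ) * z) =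
        Complex.exp ((n:ℂ) * (z - 1 - Complex.log z)) - F z) := by
  constructor
  · rintro z ⟨hzim, hzw⟩
    have hz0 : z ≠ 0 := by
      rintro rfl
      rw [hccw] at hzw
      exact one_ne_zero hzw
    rw [hF z hzim, PSECR.F_value γ n h0 hccw z hzim hz0, hzw,
      PSECR.lhs_eq n z hz0 p hp]
    ring
  · rintro z ⟨hzim, hzw⟩ hz0
    rw [hF z hzim, PSECR.F_value γ n h0 hccw z hzim hz0, hzw, mul_one,
      PSECR.lhs_eq n z hz0 p hp]
    have hlog : Complex.exp ((n:ℂ) * (z - 1 - Complex.log z))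
        = z ^ (-(n:ℤ)) * Complex.exp ((n:ℂ)*(z-1)) := by
      have h1 : (n:ℂ) * (z - 1 - Complex.log z)
          = (((-(n:ℤ)):ℤ):ℂ) * Complex.log z + (n:ℂ)*(z-1) := by push_cast; ring
      rw [h1, Complex.exp_add, Complex.exp_int_mul, Complex.exp_log hz0]
    rw [hlog]
    ring

end
end

section
/- For every odd nonnegative integer m, the function \zeta \mapsto (1/(2\pi i)) \int_{\mathbb{R}} u^{m} e^{-u^2}/(u - \zeta) du is bounded on \mathbb{C} \setminus \mathbb{R}. -/
open Complex MeasureTheory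
open scoped Real FourierTransform

noncomputable section

namespace CauchyAux10

/-- polynomial times gaussian -/
def pg (P : Polynomial ℂ) : ℝ → ℂ := fun u => P.eval (u : ℂ) * Complex.exp (-(u : ℂ) ^ 2)

lemma norm_pow_gauss (k : ℕ) (u : ℝ) :
    ‖(u : ℂ) ^ k * Complex.exp (-(u : ℂ) ^ 2)‖ = |u| ^ k * Real.exp (-u ^ 2) := by
  rw [norm_mul, norm_pow, Complex.norm_real, Real.norm_eq_abs,
    Complex.norm_exp, show -(u : ℂ) ^ 2 = ((-(u ^ 2) : ℝ) : ℂ) by push_cast; ring,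
    Complex.ofReal_re]

lemma integrable_pow_gauss (k : ℕ) :
    Integrable (fun u : ℝ => (u : ℂ) ^ k * Complex.exp (-(u : ℂ) ^ 2)) := by
  have hmeas : AEStronglyMeasurable (fun u : ℝ => (u : ℂ) ^ k * Complex.exp (-(u : ℂ) ^ 2))
      volume :=
    ((Complex.continuous_ofReal.pow k).mul
      (Complex.continuous_exp.comp ((Complex.continuous_ofReal.pow 2).neg))).aestronglyMeasurable
  have hmaj : Integrable (fun u : ℝ => ((1 : ℝ) + 2 ^ k * (Nat.factorial k : ℝ)) *
      Real.exp (-(1 / 2 : ℝ) * u ^ 2)) :=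
    (integrable_exp_neg_mul_sq (by norm_num : (0:ℝ) < 1/2)).const_mul _
  refine hmaj.mono' hmeas (Filter.Eventually.of_forall fun u => ?_)
  rw [norm_pow_gauss]
  have h1 : |u| ^ k ≤ 1 + (u ^ 2) ^ k := by
    have h2 : (|u| ^ k) ^ 2 = (u ^ 2) ^ k := by
      rw [← pow_mul, mul_comm k 2, pow_mul, _root_.sq_abs]
    nlinarith [sq_nonneg (|u| ^ k - 1), pow_nonneg (abs_nonneg u) k]
  have h3 : (u ^ 2) ^ k ≤ 2 ^ k * (Nat.factorial k : ℝ) * Real.exp (u ^ 2 / 2) := by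
    have h4 : (u ^ 2 / 2) ^ k / (Nat.factorial k : ℝ) ≤ Real.exp (u ^ 2 / 2) :=
      Real.pow_div_factorial_le_exp (u ^ 2 / 2) (by positivity) k
    have h5 : (u ^ 2) ^ k = 2 ^ k * (u ^ 2 / 2) ^ k := by
      rw [← mul_pow]; ring_nf
    rw [h5]
    rw [div_le_iff₀ (by positivity : (0:ℝ) < (Nat.factorial k : ℝ))] at h4
    calc 2 ^ k * (u ^ 2 / 2) ^ k ≤ 2 ^ k * (Real.exp (u ^ 2 / 2) * (Nat.factorial k : ℝ)) := by
          gcongr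
      _ = 2 ^ k * (Nat.factorial k : ℝ) * Real.exp (u ^ 2 / 2) := by ring
  have hexp : Real.exp (-u ^ 2) ≤ Real.exp (-(1/2 : ℝ) * u ^ 2) := by
    apply Real.exp_le_exp.2; nlinarith [sq_nonneg u]
  have hsplit : Real.exp (u ^ 2 / 2) * Real.exp (-u ^ 2) = Real.exp (-(1/2 : ℝ) * u ^ 2) := by
    rw [← Real.exp_add]; ring_nf
  calc |u| ^ k * Real.exp (-u ^ 2) ≤ (1 + (u ^ 2) ^ k) * Real.exp (-u ^ 2) := by
        apply mul_le_mul_of_nonneg_right h1 (Real.exp_pos _).le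
    _ = Real.exp (-u ^ 2) + (u ^ 2) ^ k * Real.exp (-u ^ 2) := by ring
    _ ≤ Real.exp (-(1/2 : ℝ) * u ^ 2) +
        (2 ^ k * (Nat.factorial k : ℝ) * Real.exp (u ^ 2 / 2)) * Real.exp (-u ^ 2) := by
        gcongr
    _ = ((1 : ℝ) + 2 ^ k * (Nat.factorial k : ℝ)) * Real.exp (-(1 / 2 : ℝ) * u ^ 2) := by
        rw [mul_assoc, hsplit]; ring

lemma integrable_pg (P : Polynomial ℂ) : Integrable (pg P) := by
  induction P using Polynomial.induction_on' with
  | add p q hp hq =>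
      have := hp.add hq
      refine this.congr (Filter.Eventually.of_forall fun u => ?_)
      simp [pg, add_mul]
  | monomial n a =>
      have := (integrable_pow_gauss n).const_mul a
      refine this.congr (Filter.Eventually.of_forall fun u => ?_)
      simp [pg, Polynomial.eval_monomial, mul_assoc]

lemma hasDerivAt_pg (P : Polynomial ℂ) (u : ℝ) :
    HasDerivAt (pg P)
      (pg (Polynomial.derivative P - Polynomial.C 2 * Polynomial.X * P) u) u := by
  have h : HasDerivAt (fun z : ℂ => P.eval z * Complex.exp (-z ^ 2))
      ((Polynomial.derivative P).eval (u : ℂ) * Complex.exp (-(u : ℂ) ^ 2)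
        + P.eval (u : ℂ) * (Complex.exp (-(u : ℂ) ^ 2) * -(2 * (u : ℂ) ^ 1))) (u : ℂ) :=
    (P.hasDerivAt _).mul ((hasDerivAt_pow 2 (u : ℂ)).neg.cexp)
  have h2 := h.comp_ofReal
  convert h2 using 1
  · rfl
  simp [pg]
  ring

lemma iteratedDeriv_rep (m n : ℕ) :
    ∃ P : Polynomial ℂ,
      iteratedDeriv n (fun u : ℝ => (u : ℂ) ^ m * Complex.exp (-(u : ℂ) ^ 2)) = pg P := by
  induction n with
  | zero => exact ⟨Polynomial.X ^ m, by funext u; simp [pg]⟩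
  | succ n ih =>
      obtain ⟨P, hP⟩ := ih
      refine ⟨Polynomial.derivative P - Polynomial.C 2 * Polynomial.X * P, ?_⟩
      rw [iteratedDeriv_succ, hP]
      funext u
      exact (hasDerivAt_pg P u).deriv

lemma integrable_iteratedDeriv (m n : ℕ) :
    Integrable (iteratedDeriv n (fun u : ℝ => (u : ℂ) ^ m * Complex.exp (-(u : ℂ) ^ 2))) := by
  obtain ⟨P, hP⟩ := iteratedDeriv_rep m n
  rw [hP]; exact integrable_pg P

lemma integrable_fm (m : ℕ) :
    Integrable (fun u : ℝ => (u : ℂ) ^ m * Complex.exp (-(u : ℂ) ^ 2)) := by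
  simpa [iteratedDeriv_zero] using integrable_iteratedDeriv m 0

lemma contDiff_fm (m : ℕ) :
    ContDiff ℝ (⊤ : ℕ∞) (fun u : ℝ => (u : ℂ) ^ m * Complex.exp (-(u : ℂ) ^ 2)) := by
  have h1 : ContDiff ℝ (⊤ : ℕ∞) (fun u : ℝ => (u : ℂ)) := Complex.ofRealCLM.contDiff
  exact (h1.pow m).mul (Complex.contDiff_exp.comp ((h1.pow 2).neg))

lemma integrable_fourier (m : ℕ) :
    Integrable (𝓕 (fun u : ℝ => (u : ℂ) ^ m * Complex.exp (-(u : ℂ) ^ 2))) := by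
  set f := fun u : ℝ => (u : ℂ) ^ m * Complex.exp (-(u : ℂ) ^ 2) with hf
  have hint : Integrable f := integrable_fm m
  have hcont : Continuous (𝓕 f) :=
    VectorFourier.fourierIntegral_continuous Real.continuous_fourierChar
      (innerSL ℝ).continuous₂ hint
  set C₁ := ∫ u : ℝ, ‖f u‖ with hC₁
  set C₂ := ∫ u : ℝ, ‖iteratedDeriv 2 f u‖ with hC₂
  have key : ∀ ξ : ℝ, (1 + ξ ^ 2) * ‖𝓕 f ξ‖ ≤ C₁ + C₂ := by
    intro ξ
    have hb1 : ‖𝓕 f ξ‖ ≤ C₁ :=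
      VectorFourier.norm_fourierIntegral_le_integral_norm _ _ _ _ _
    have h2 : 𝓕 (iteratedDeriv 2 f) = fun ξ : ℝ => (2 * ↑π * I * ξ) ^ 2 • 𝓕 f ξ := by
      apply Real.fourier_iteratedDeriv (N := (2 : ℕ∞)) ((contDiff_fm m).of_le (by exact_mod_cast le_top))
      · intro n _; exact integrable_iteratedDeriv m n
      · exact le_refl _
    have hb2' : ‖𝓕 (iteratedDeriv 2 f) ξ‖ ≤ C₂ :=
      VectorFourier.norm_fourierIntegral_le_integral_norm _ _ _ _ _
    rw [h2] at hb2'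
    have hnorm : ‖(2 * (π : ℂ) * I * ξ) ^ 2 • 𝓕 f ξ‖ = (2 * π) ^ 2 * ξ ^ 2 * ‖𝓕 f ξ‖ := by
      rw [norm_smul, norm_pow]
      have hn : ‖(2 * (π:ℂ) * I * ξ)‖ = 2 * π * |ξ| := by
        simp [norm_mul, Complex.norm_real, Real.norm_eq_abs, _root_.abs_of_nonneg Real.pi_nonneg]
      rw [hn, mul_pow, _root_.sq_abs]
    rw [hnorm] at hb2'
    have hξ : ξ ^ 2 * ‖𝓕 f ξ‖ ≤ C₂ := by
      have h1 : (1:ℝ) ≤ (2 * π) ^ 2 := by nlinarith [Real.pi_gt_three]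
      have ht : 0 ≤ ξ ^ 2 * ‖𝓕 f ξ‖ := mul_nonneg (sq_nonneg ξ) (norm_nonneg _)
      nlinarith [mul_le_mul_of_nonneg_right h1 ht]
    nlinarith
  have hmaj : Integrable (fun ξ : ℝ => (C₁ + C₂) * (1 + ξ ^ 2)⁻¹) :=
    integrable_inv_one_add_sq.const_mul _
  refine hmaj.mono' hcont.aestronglyMeasurable (Filter.Eventually.of_forall fun ξ => ?_)
  have hpos : (0:ℝ) < 1 + ξ ^ 2 := by positivity
  rw [← div_eq_mul_inv, le_div_iff₀ hpos, mul_comm]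
  exact key ξ

/-- `∫ t in Ioi 0, exp (a t) = -a⁻¹` for `re a < 0`, with integrability. -/
lemma integrableOn_cexp {a : ℂ} (ha : a.re < 0) :
    IntegrableOn (fun t : ℝ => Complex.exp (a * t)) (Set.Ioi 0) := by
  have hmeas : AEStronglyMeasurable (fun t : ℝ => Complex.exp (a * t))
      (volume.restrict (Set.Ioi (0:ℝ))) :=
    (Complex.continuous_exp.comp (continuous_const.mul Complex.continuous_ofReal)).aestronglyMeasurable
  refine (exp_neg_integrableOn_Ioi 0 (by linarith : 0 < -a.re)).mono' hmeas
    (Filter.Eventually.of_forall fun t => ?_)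
  rw [Complex.norm_exp]
  have : (a * t).re = a.re * t := by simp [Complex.mul_re]
  rw [this]
  apply le_of_eq; congr 1; ring

lemma integral_cexp_Ioi {a : ℂ} (ha : a.re < 0) :
    ∫ t in Set.Ioi (0:ℝ), Complex.exp (a * t) = -a⁻¹ := by
  have ha0 : a ≠ 0 := fun h => by simp [h] at ha
  have hderiv : ∀ x ∈ Set.Ici (0:ℝ),
      HasDerivAt (fun t : ℝ => a⁻¹ * Complex.exp (a * t)) (Complex.exp (a * x)) x := by
    intro x _
    have h1 : HasDerivAt (fun t : ℝ => a * (t:ℂ)) a x := by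
      simpa using (Complex.ofRealCLM.hasDerivAt (x := x)).const_mul a
    have h2 := h1.cexp
    have h3 := h2.const_mul a⁻¹
    have heq : a⁻¹ * (Complex.exp (a * (x:ℝ)) * a) = Complex.exp (a * (x:ℝ)) := by
      field_simp
    rw [← heq]
    exact h3
  have htend : Filter.Tendsto (fun t : ℝ => a⁻¹ * Complex.exp (a * t)) Filter.atTop
      (nhds 0) := by
    rw [tendsto_zero_iff_norm_tendsto_zero]
    have heq : ∀ t : ℝ, ‖a⁻¹ * Complex.exp (a * t)‖ = ‖a⁻¹‖ * Real.exp (a.re * t) := by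
      intro t
      rw [norm_mul, Complex.norm_exp]
      congr 2
      simp [Complex.mul_re]
    simp_rw [heq]
    rw [show (0:ℝ) = ‖a⁻¹‖ * 0 by ring]
    apply Filter.Tendsto.const_mul
    apply Real.tendsto_exp_atBot.comp
    exact Filter.Tendsto.const_mul_atTop_of_neg ha Filter.tendsto_id
  have := integral_Ioi_of_hasDerivAt_of_tendsto' hderiv (integrableOn_cexp ha) htend
  rw [this]
  simp

lemma inv_eq_I_mul {ζ : ℂ} (hζ : 0 < ζ.im) (u : ℝ) :
    ((u : ℂ) - ζ)⁻¹ = I * ∫ t in Set.Ioi (0:ℝ), Complex.exp (-I * ((u:ℂ) - ζ) * t) := by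
  have ha : (-I * ((u:ℂ) - ζ)).re < 0 := by
    simp [Complex.mul_re, Complex.sub_im]
    linarith
  have h := integral_cexp_Ioi ha
  have hrw : (fun t : ℝ => Complex.exp (-I * ((u:ℂ) - ζ) * t)) =
      fun t : ℝ => Complex.exp ((-I * ((u:ℂ) - ζ)) * t) := by rfl
  rw [hrw, h]
  have hw : ((u:ℂ) - ζ) ≠ 0 := by
    intro hc
    have : ((u:ℂ) - ζ).im = 0 := by rw [hc]; rfl
    simp [Complex.sub_im] at this
    linarith
  rw [mul_inv, inv_neg, Complex.inv_I, neg_neg, mul_neg, ← mul_assoc, Complex.I_mul_I]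
  field_simp

end CauchyAux10

open CauchyAux10

lemma cauchy_key_bound (m : ℕ) {ζ : ℂ} (hζ : 0 < ζ.im) :
    ‖∫ u : ℝ, (u:ℂ) ^ m * Complex.exp (-(u:ℂ) ^ 2) / ((u:ℂ) - ζ)‖ ≤
      2 * π * ∫ ξ : ℝ, ‖𝓕 (fun u : ℝ => (u:ℂ) ^ m * Complex.exp (-(u:ℂ) ^ 2)) ξ‖ := by
  set f := fun u : ℝ => (u : ℂ) ^ m * Complex.exp (-(u : ℂ) ^ 2) with hf
  have hfc : Continuous f :=
    ((Complex.continuous_ofReal.pow m).mul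
      (Complex.continuous_exp.comp ((Complex.continuous_ofReal.pow 2).neg)))
  have hfi : Integrable f := integrable_fm m
  -- Fubini integrability
  have hF : Integrable (Function.uncurry fun (u : ℝ) (t : ℝ) =>
      f u * Complex.exp (-I * ((u:ℂ) - ζ) * t))
      (volume.prod (volume.restrict (Set.Ioi (0:ℝ)))) := by
    have hcont : Continuous (Function.uncurry fun (u : ℝ) (t : ℝ) =>
        f u * Complex.exp (-I * ((u:ℂ) - ζ) * t)) := by
      apply (hfc.comp continuous_fst).mul
      apply Complex.continuous_exp.comp
      exact (continuous_const.mul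
        ((Complex.continuous_ofReal.comp continuous_fst).sub continuous_const)).mul
        (Complex.continuous_ofReal.comp continuous_snd)
    have hmaj : Integrable (fun p : ℝ × ℝ => ‖f p.1‖ * Real.exp (-ζ.im * p.2))
        (volume.prod (volume.restrict (Set.Ioi (0:ℝ)))) :=
      Integrable.mul_prod hfi.norm (exp_neg_integrableOn_Ioi 0 hζ)
    refine hmaj.mono' hcont.aestronglyMeasurable (Filter.Eventually.of_forall fun p => ?_)
    rw [Function.uncurry_apply_pair, norm_mul]
    apply mul_le_mul_of_nonneg_left _ (norm_nonneg _)
    rw [Complex.norm_exp]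
    apply le_of_eq; congr 1
    simp [Complex.mul_re, Complex.mul_im, Complex.sub_re, Complex.sub_im]
    try ring
  -- rewrite the integral
  have step1 : (∫ u : ℝ, f u / ((u:ℂ) - ζ)) =
      I * ∫ u : ℝ, ∫ t in Set.Ioi (0:ℝ), f u * Complex.exp (-I * ((u:ℂ) - ζ) * t) := by
    rw [← integral_const_mul]
    refine integral_congr_ae (Filter.Eventually.of_forall fun u => ?_)
    beta_reduce
    rw [div_eq_mul_inv, inv_eq_I_mul hζ u, integral_const_mul]
    ring
  have step2 : (∫ u : ℝ, ∫ t in Set.Ioi (0:ℝ), f u * Complex.exp (-I * ((u:ℂ) - ζ) * t)) =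
      ∫ t in Set.Ioi (0:ℝ), ∫ u : ℝ, f u * Complex.exp (-I * ((u:ℂ) - ζ) * t) :=
    integral_integral_swap hF
  have inner_eq : ∀ t : ℝ, (∫ u : ℝ, f u * Complex.exp (-I * ((u:ℂ) - ζ) * t)) =
      Complex.exp (I * t * ζ) * 𝓕 f (t / (2 * π)) := by
    intro t
    rw [Real.fourier_real_eq_integral_exp_smul, ← integral_const_mul]
    refine integral_congr_ae (Filter.Eventually.of_forall fun u => ?_)
    beta_reduce
    rw [smul_eq_mul, ← mul_assoc, ← Complex.exp_add]
    rw [show (-2 * π * u * (t / (2 * π)) : ℝ) = -(u * t) by field_simp]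
    rw [mul_comm (f u)]
    congr 1
    push_cast
    ring
  rw [step1, step2]
  rw [norm_mul, Complex.norm_I, one_mul]
  set C := ∫ ξ : ℝ, ‖𝓕 f ξ‖ with hC
  have h2π : (2 * π : ℝ) ≠ 0 := by positivity
  have hcomp : Integrable (fun t : ℝ => ‖𝓕 f (t / (2 * π))‖) :=
    ((integrable_fourier m).comp_div h2π).norm
  calc ‖∫ t in Set.Ioi (0:ℝ), ∫ u : ℝ, f u * Complex.exp (-I * ((u:ℂ) - ζ) * t)‖
      ≤ ∫ t in Set.Ioi (0:ℝ), ‖∫ u : ℝ, f u * Complex.exp (-I * ((u:ℂ) - ζ) * t)‖ :=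
        norm_integral_le_integral_norm _
    _ ≤ ∫ t in Set.Ioi (0:ℝ), ‖𝓕 f (t / (2 * π))‖ := by
        apply integral_mono_of_nonneg (Filter.Eventually.of_forall fun t => norm_nonneg _)
          hcomp.integrableOn
        refine (ae_restrict_iff' measurableSet_Ioi).2
          (Filter.Eventually.of_forall fun t ht => ?_)
        show ‖∫ u : ℝ, f u * Complex.exp (-I * ((u:ℂ) - ζ) * t)‖ ≤ ‖𝓕 f (t / (2 * π))‖
        rw [inner_eq t, norm_mul]
        apply mul_le_of_le_one_left (norm_nonneg _)
        rw [Complex.norm_exp]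
        rw [Real.exp_le_one_iff]
        have : (I * (t:ℂ) * ζ).re = -(t * ζ.im) := by
          simp [Complex.mul_re, Complex.mul_im]
        rw [this]
        have ht' : 0 < t := ht
        nlinarith
    _ ≤ ∫ t : ℝ, ‖𝓕 f (t / (2 * π))‖ :=
        setIntegral_le_integral hcomp (Filter.Eventually.of_forall fun t => norm_nonneg _)
    _ = |2 * π| • ∫ ξ : ℝ, ‖𝓕 f ξ‖ := MeasureTheory.Measure.integral_comp_div (fun ξ => ‖𝓕 f ξ‖) (2 * π)
    _ = 2 * π * C := by
        rw [smul_eq_mul, abs_of_pos (by positivity)]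

lemma cauchy_conj_eq (m : ℕ) (ζ : ℂ) :
    (starRingEnd ℂ) (∫ u : ℝ, (u:ℂ) ^ m * Complex.exp (-(u:ℂ) ^ 2) / ((u:ℂ) - ζ)) =
      ∫ u : ℝ, (u:ℂ) ^ m * Complex.exp (-(u:ℂ) ^ 2) / ((u:ℂ) - (starRingEnd ℂ) ζ) := by
  rw [← integral_conj]
  congr 1; funext u
  rw [map_div₀, map_mul, map_pow, Complex.conj_ofReal, ← Complex.exp_conj, map_neg, map_pow,
    Complex.conj_ofReal, map_sub, Complex.conj_ofReal]

end

noncomputable section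

/-- for odd `m`, the Cauchy transform of `u^m e^{-u²}` is bounded
on `ℂ \ ℝ`. -/
theorem cauchy_transform_odd_moment_bounded (m : ℕ) (hm : Odd m) :
    ∃ C : ℝ, ∀ ζ : ℂ, ζ.im ≠ 0 →
      ‖(1 / (2 * Real.pi * I)) *
          ∫ u : ℝ, (u:ℂ) ^ m * Complex.exp (-(u:ℂ) ^ 2) / ((u:ℂ) - ζ)‖ ≤ C := by
  refine ⟨∫ ξ : ℝ, ‖𝓕 (fun u : ℝ => (u:ℂ) ^ m * Complex.exp (-(u:ℂ) ^ 2)) ξ‖, fun ζ hζ => ?_⟩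
  set C := ∫ ξ : ℝ, ‖𝓕 (fun u : ℝ => (u:ℂ) ^ m * Complex.exp (-(u:ℂ) ^ 2)) ξ‖ with hC
  have hπ : (0:ℝ) < Real.pi := Real.pi_pos
  have hnorm1 : ‖(1 / (2 * (Real.pi:ℂ) * I) : ℂ)‖ = 1 / (2 * Real.pi) := by
    rw [norm_div, norm_one, norm_mul, norm_mul, Complex.norm_I, Complex.norm_real]
    simp [abs_of_pos hπ]
  have hbound : ‖∫ u : ℝ, (u:ℂ) ^ m * Complex.exp (-(u:ℂ) ^ 2) / ((u:ℂ) - ζ)‖ ≤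
      2 * Real.pi * C := by
    rcases lt_or_gt_of_ne hζ with hneg | hpos
    · have hconj : 0 < ((starRingEnd ℂ) ζ).im := by
        rw [Complex.conj_im]; linarith
      have h1 := cauchy_key_bound m hconj
      have h2 := cauchy_conj_eq m ζ
      calc ‖∫ u : ℝ, (u:ℂ) ^ m * Complex.exp (-(u:ℂ) ^ 2) / ((u:ℂ) - ζ)‖
          = ‖(starRingEnd ℂ) (∫ u : ℝ, (u:ℂ) ^ m * Complex.exp (-(u:ℂ) ^ 2) / ((u:ℂ) - ζ))‖ :=
            (RCLike.norm_conj _).symm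
        _ = ‖∫ u : ℝ, (u:ℂ) ^ m * Complex.exp (-(u:ℂ) ^ 2) / ((u:ℂ) - (starRingEnd ℂ) ζ)‖ := by
            rw [h2]
        _ ≤ 2 * Real.pi * C := h1
    · exact cauchy_key_bound m hpos
  calc ‖(1 / (2 * (Real.pi:ℂ) * I)) *
        ∫ u : ℝ, (u:ℂ) ^ m * Complex.exp (-(u:ℂ) ^ 2) / ((u:ℂ) - ζ)‖
      = (1 / (2 * Real.pi)) * ‖∫ u : ℝ, (u:ℂ) ^ m * Complex.exp (-(u:ℂ) ^ 2) / ((u:ℂ) - ζ)‖ := by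
        rw [norm_mul, hnorm1]
    _ ≤ (1 / (2 * Real.pi)) * (2 * Real.pi * C) := by
        apply mul_le_mul_of_nonneg_left hbound (by positivity)
    _ = C := by field_simp

end
end
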